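/- Let V1, U1, Y1, Y2, U2, V2 be discrete random variables forming the long Markov chain V1–U1–Y1–Y2–U2–V2 (i.e., each variable is conditionally independent of all preceding ones given its immediate predecessor). Then I(V1;Y1) + I(U1;Y1|V1) + I(V2;Y2) + I(U2;Y2|V2) − I(U1;U2) = I(U1,U2;Y1,Y2). -/

import Mathlib

open Real Finset

/-- Probability that the random variable `X` takes value `a`, under pmf `p` on `Ω`. -/
noncomputable def distOf {Ω A : Type*} [Fintype Ω] [DecidableEq A] (p : Ω → ℝ) (X : Ω → A)
    (a : A) : ℝ :=
  ∑ ω ∈ Finset.univ.filter (fun ω => X ω = a), p ω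

/-- Shannon entropy (natural log) of a discrete random variable. -/
noncomputable def Hd {Ω A : Type*} [Fintype Ω] [Fintype A] [DecidableEq A]
    (p : Ω → ℝ) (X : Ω → A) : ℝ :=
  -∑ a : A, distOf p X a * Real.log (distOf p X a)

/-- Conditional entropy H(X|Y). -/
noncomputable def CHd {Ω A B : Type*} [Fintype Ω] [Fintype A] [DecidableEq A]
    [Fintype B] [DecidableEq B] (p : Ω → ℝ) (X : Ω → A) (Y : Ω → B) : ℝ :=
  Hd p (fun ω => (X ω, Y ω)) - Hd p Y

/-- Mutual information I(X;Y). -/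
noncomputable def MId {Ω A B : Type*} [Fintype Ω] [Fintype A] [DecidableEq A]
    [Fintype B] [DecidableEq B] (p : Ω → ℝ) (X : Ω → A) (Y : Ω → B) : ℝ :=
  Hd p X + Hd p Y - Hd p (fun ω => (X ω, Y ω))

/-- Conditional mutual information I(X;Y|Z). -/
noncomputable def CMId {Ω A B C : Type*} [Fintype Ω] [Fintype A] [DecidableEq A]
    [Fintype B] [DecidableEq B] [Fintype C] [DecidableEq C]
    (p : Ω → ℝ) (X : Ω → A) (Y : Ω → B) (Z : Ω → C) : ℝ :=
  Hd p (fun ω => (X ω, Z ω)) + Hd p (fun ω => (Y ω, Z ω))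
    - Hd p (fun ω => (X ω, Y ω, Z ω)) - Hd p Z

section helpers
variable {Ω A B C : Type*} [Fintype Ω] [Fintype A] [DecidableEq A]
  [Fintype B] [DecidableEq B] [Fintype C] [DecidableEq C]

set_option linter.unusedSectionVars false

lemma distOf_nonneg (p : Ω → ℝ) (hp : ∀ ω, 0 ≤ p ω) (X : Ω → A) (a : A) :
    0 ≤ distOf p X a :=
  Finset.sum_nonneg fun ω _ => hp ω

lemma sum_distOf_mul (p : Ω → ℝ) (X : Ω → A) (F : A → ℝ) :
    ∑ a, distOf p X a * F a = ∑ ω, p ω * F (X ω) := by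
  rw [← Finset.sum_fiberwise univ X (fun ω => p ω * F (X ω))]
  refine Finset.sum_congr rfl fun a _ => ?_
  unfold distOf
  rw [Finset.sum_mul]
  refine Finset.sum_congr rfl fun ω hω => ?_
  simp only [Finset.mem_filter, Finset.mem_univ, true_and] at hω
  rw [hω]

lemma Hd_eq_sum (p : Ω → ℝ) (X : Ω → A) :
    Hd p X = -∑ ω, p ω * Real.log (distOf p X (X ω)) := by
  unfold Hd
  rw [sum_distOf_mul p X (fun a => Real.log (distOf p X a))]

lemma le_distOf_self (p : Ω → ℝ) (hp : ∀ ω, 0 ≤ p ω) (X : Ω → A) (ω : Ω) :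
    p ω ≤ distOf p X (X ω) := by
  apply Finset.single_le_sum (fun i (_ : i ∈ _) => hp i)
  simp

lemma distOf_mono (p : Ω → ℝ) (hp : ∀ ω, 0 ≤ p ω) (W : Ω → A) (V : Ω → B) (t : A) (s : B)
    (h : ∀ ω', W ω' = t → V ω' = s) :
    distOf p W t ≤ distOf p V s := by
  unfold distOf
  apply Finset.sum_le_sum_of_subset_of_nonneg
  · intro ω' hω'
    simp only [Finset.mem_filter, Finset.mem_univ, true_and] at *
    exact h ω' hω'
  · intro i _ _; exact hp i

lemma marg_fst (p : Ω → ℝ) (X : Ω → A) (Z : Ω → C) (c : C) :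
    ∑ a, distOf p (fun ω => (X ω, Z ω)) (a, c) = distOf p Z c := by
  unfold distOf
  rw [← Finset.sum_fiberwise (univ.filter fun ω => Z ω = c) X p]
  refine Finset.sum_congr rfl fun a _ => ?_
  congr 1
  rw [Finset.filter_filter]
  ext ω
  simp [Prod.ext_iff, and_comm]

lemma sum_distOf (p : Ω → ℝ) (hp1 : ∑ ω, p ω = 1) (X : Ω → A) :
    ∑ a, distOf p X a = 1 := by
  unfold distOf
  rw [Finset.sum_fiberwise univ X p, hp1]

lemma CMId_nonneg (p : Ω → ℝ) (hp : ∀ ω, 0 ≤ p ω) (hp1 : ∑ ω, p ω = 1)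
    (X : Ω → A) (Y : Ω → B) (Z : Ω → C) : 0 ≤ CMId p X Y Z := by
  classical
  set dW : A × B × C → ℝ := distOf p (fun ω => (X ω, Y ω, Z ω)) with hdW
  set dXZ : A × C → ℝ := distOf p (fun ω => (X ω, Z ω)) with hdXZ
  set dYZ : B × C → ℝ := distOf p (fun ω => (Y ω, Z ω)) with hdYZ
  set dZ : C → ℝ := distOf p Z with hdZ
  set G : A × B × C → ℝ :=
    fun t => dXZ (t.1, t.2.2) * dYZ (t.2.1, t.2.2) / (dW t * dZ t.2.2) with hG
  -- Step A : express CMId as a single omega-sum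
  have hA : CMId p X Y Z = ∑ ω, p ω *
      (Real.log (dW (X ω, Y ω, Z ω)) + Real.log (dZ (Z ω))
        - Real.log (dXZ (X ω, Z ω)) - Real.log (dYZ (Y ω, Z ω))) := by
    unfold CMId
    rw [Hd_eq_sum p (fun ω => (X ω, Z ω)), Hd_eq_sum p (fun ω => (Y ω, Z ω)),
      Hd_eq_sum p (fun ω => (X ω, Y ω, Z ω)), Hd_eq_sum p Z]
    rw [← hdW, ← hdXZ, ← hdYZ, ← hdZ]
    have comb : ∀ f g h k : Ω → ℝ,
        (-∑ ω, f ω) + (-∑ ω, g ω) - (-∑ ω, h ω) - (-∑ ω, k ω)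
          = ∑ ω, (h ω + k ω - f ω - g ω) := by
      intro f g h k
      rw [show (fun ω => h ω + k ω - f ω - g ω) = fun ω =>
        (fun ω => h ω + k ω - f ω) ω - g ω from rfl, Finset.sum_sub_distrib,
        show (fun ω => h ω + k ω - f ω) = fun ω =>
        (fun ω => h ω + k ω) ω - f ω from rfl, Finset.sum_sub_distrib,
        Finset.sum_add_distrib]
      ring
    rw [comb (fun ω => p ω * Real.log (dXZ (X ω, Z ω)))
      (fun ω => p ω * Real.log (dYZ (Y ω, Z ω)))
      (fun ω => p ω * Real.log (dW (X ω, Y ω, Z ω)))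
      (fun ω => p ω * Real.log (dZ (Z ω)))]
    exact Finset.sum_congr rfl fun ω _ => by ring
  -- Step B : pointwise lower bound
  have hB : ∀ ω, p ω - p ω * G (X ω, Y ω, Z ω) ≤ p ω *
      (Real.log (dW (X ω, Y ω, Z ω)) + Real.log (dZ (Z ω))
        - Real.log (dXZ (X ω, Z ω)) - Real.log (dYZ (Y ω, Z ω))) := by
    intro ω
    rcases eq_or_lt_of_le (hp ω) with h0 | h0
    · simp [← h0]
    · have hw : 0 < dW (X ω, Y ω, Z ω) :=
        lt_of_lt_of_le h0 (le_distOf_self p hp (fun ω => (X ω, Y ω, Z ω)) ω)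
      have hxz : 0 < dXZ (X ω, Z ω) :=
        lt_of_lt_of_le h0 (le_distOf_self p hp (fun ω => (X ω, Z ω)) ω)
      have hyz : 0 < dYZ (Y ω, Z ω) :=
        lt_of_lt_of_le h0 (le_distOf_self p hp (fun ω => (Y ω, Z ω)) ω)
      have hz : 0 < dZ (Z ω) := lt_of_lt_of_le h0 (le_distOf_self p hp Z ω)
      have hRpos : 0 < G (X ω, Y ω, Z ω) := by
        rw [hG]
        positivity
      have hlog := Real.log_le_sub_one_of_pos hRpos
      have hlogG : Real.log (G (X ω, Y ω, Z ω)) =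
          Real.log (dXZ (X ω, Z ω)) + Real.log (dYZ (Y ω, Z ω))
            - (Real.log (dW (X ω, Y ω, Z ω)) + Real.log (dZ (Z ω))) := by
        rw [hG]
        rw [Real.log_div (by positivity) (by positivity), Real.log_mul hxz.ne' hyz.ne',
          Real.log_mul hw.ne' hz.ne']
      rw [hlogG] at hlog
      nlinarith [hlog, h0]
  -- Step C/D/E : the correction sum is at most 1
  have hT : ∑ ω, p ω * G (X ω, Y ω, Z ω) ≤ 1 := by
    rw [← sum_distOf_mul p (fun ω => (X ω, Y ω, Z ω)) G, ← hdW]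
    have step1 : ∑ t : A × B × C, dW t * G t ≤
        ∑ t : A × B × C, (if dZ t.2.2 = 0 then 0
          else dXZ (t.1, t.2.2) * dYZ (t.2.1, t.2.2) / dZ t.2.2) := by
      apply Finset.sum_le_sum
      intro t _
      by_cases hw : dW t = 0
      · rw [hw, zero_mul]
        by_cases hz : dZ t.2.2 = 0
        · rw [if_pos hz]
        · rw [if_neg hz]
          exact div_nonneg (mul_nonneg (distOf_nonneg p hp _ _) (distOf_nonneg p hp _ _))
            (distOf_nonneg p hp Z _)
      · have hwpos : 0 < dW t := lt_of_le_of_ne (distOf_nonneg p hp _ t) (Ne.symm hw)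
        have hzle : dW t ≤ dZ t.2.2 := by
          apply distOf_mono p hp
          intro ω' hω'
          rw [← hω']
        have hzpos : 0 < dZ t.2.2 := lt_of_lt_of_le hwpos hzle
        rw [if_neg hzpos.ne']
        apply le_of_eq
        simp only [hG]
        field_simp
    have step2 : ∑ t : A × B × C, (if dZ t.2.2 = 0 then 0
        else dXZ (t.1, t.2.2) * dYZ (t.2.1, t.2.2) / dZ t.2.2) ≤ ∑ c, dZ c := by
      have heq := Fintype.sum_equiv
        (⟨fun u => (u.2.1, u.2.2, u.1), fun t => (t.2.2, t.1, t.2.1),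
          fun ⟨c, a, b⟩ => rfl, fun ⟨a, b, c⟩ => rfl⟩ : (C × A × B) ≃ (A × B × C))
        (fun u : C × A × B => (if dZ u.1 = 0 then 0
          else dXZ (u.2.1, u.1) * dYZ (u.2.2, u.1) / dZ u.1))
        (fun t : A × B × C => (if dZ t.2.2 = 0 then 0
          else dXZ (t.1, t.2.2) * dYZ (t.2.1, t.2.2) / dZ t.2.2))
        (fun u => by rcases u with ⟨c, a, b⟩; rfl)
      rw [← heq, Fintype.sum_prod_type]
      apply Finset.sum_le_sum
      intro c _
      by_cases hzc : dZ c = 0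
      · simp only [if_pos hzc, Finset.sum_const_zero]
        exact distOf_nonneg p hp Z c
      · simp only [if_neg hzc]
        rw [show ∑ u : A × B, dXZ (u.1, c) * dYZ (u.2, c) / dZ c
            = (∑ a, dXZ (a, c)) * (∑ b, dYZ (b, c)) / dZ c from by
          rw [Fintype.sum_prod_type, Finset.sum_mul_sum]
          simp only [Finset.sum_div]]
        rw [hdXZ, hdYZ, marg_fst p X Z c, marg_fst p Y Z c, ← hdZ]
        rw [mul_div_assoc, div_self hzc, mul_one]
    calc ∑ t : A × B × C, dW t * G t ≤ _ := step1
      _ ≤ ∑ c, dZ c := step2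
      _ = 1 := sum_distOf p hp1 Z
  rw [hA]
  have hsum := Finset.sum_le_sum (fun ω (_ : ω ∈ (univ : Finset Ω)) => hB ω)
  rw [Finset.sum_sub_distrib, hp1] at hsum
  linarith


lemma Hd_congr (p : Ω → ℝ) (W : Ω → A) (V : Ω → B)
    (h : ∀ ω ω', W ω' = W ω ↔ V ω' = V ω) : Hd p W = Hd p V := by
  rw [Hd_eq_sum, Hd_eq_sum]
  congr 1
  refine Finset.sum_congr rfl fun ω _ => ?_
  have : distOf p W (W ω) = distOf p V (V ω) := by
    unfold distOf
    congr 1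
    ext ω'
    simp [h ω ω']
  rw [this]

lemma CMId_chain {D : Type*} [Fintype D] [DecidableEq D] (p : Ω → ℝ)
    (X : Ω → A) (Y : Ω → B) (W : Ω → D) (Z : Ω → C) :
    CMId p X (fun ω => (Y ω, W ω)) Z
      = CMId p X Y Z + CMId p X W (fun ω => (Y ω, Z ω)) := by
  unfold CMId
  rw [Hd_congr p (fun ω => ((Y ω, W ω), Z ω)) (fun ω => (W ω, (Y ω, Z ω)))
      (by intro ω ω'; simp only [Prod.ext_iff]; tauto),
    Hd_congr p (fun ω => (X ω, (Y ω, W ω), Z ω)) (fun ω => (X ω, W ω, Y ω, Z ω))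
      (by intro ω ω'; simp only [Prod.ext_iff]; tauto)]
  ring

lemma CMId_congr_mid {D : Type*} [Fintype D] [DecidableEq D] (p : Ω → ℝ)
    (X : Ω → A) (Y : Ω → B) (Y' : Ω → D) (Z : Ω → C)
    (h : ∀ ω ω', Y ω' = Y ω ↔ Y' ω' = Y' ω) :
    CMId p X Y Z = CMId p X Y' Z := by
  unfold CMId
  rw [Hd_congr p (fun ω => (Y ω, Z ω)) (fun ω => (Y' ω, Z ω))
      (by intro ω ω'; simp only [Prod.ext_iff, h ω ω']),
    Hd_congr p (fun ω => (X ω, Y ω, Z ω)) (fun ω => (X ω, Y' ω, Z ω))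
      (by intro ω ω'; simp only [Prod.ext_iff, h ω ω'])]

end helpers

theorem stmt3 {Ω A B C D E F : Type*} [Fintype Ω]
    [Fintype A] [DecidableEq A] [Fintype B] [DecidableEq B] [Fintype C] [DecidableEq C]
    [Fintype D] [DecidableEq D] [Fintype E] [DecidableEq E] [Fintype F] [DecidableEq F]
    (p : Ω → ℝ) (hp : ∀ ω, 0 ≤ p ω) (hp1 : ∑ ω, p ω = 1)
    (V1 : Ω → A) (U1 : Ω → B) (Y1 : Ω → C) (Y2 : Ω → D) (U2 : Ω → E) (V2 : Ω → F)
    -- long Markov chain V1 - U1 - Y1 - Y2 - U2 - V2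
    (hM1 : CMId p Y1 V1 U1 = 0)
    (hM2 : CMId p Y2 (fun ω => (V1 ω, U1 ω)) Y1 = 0)
    (hM3 : CMId p U2 (fun ω => (V1 ω, U1 ω, Y1 ω)) Y2 = 0)
    (hM4 : CMId p V2 (fun ω => (V1 ω, U1 ω, Y1 ω, Y2 ω)) U2 = 0) :
    MId p V1 Y1 + CMId p U1 Y1 V1 + MId p V2 Y2 + CMId p U2 Y2 V2 - MId p U1 U2
      = MId p (fun ω => (U1 ω, U2 ω)) (fun ω => (Y1 ω, Y2 ω)) := by
  -- Derived vanishing conditional mutual informations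
  have d1 : CMId p V2 Y2 U2 = 0 := by
    have e := CMId_congr_mid p V2 (fun ω => (V1 ω, U1 ω, Y1 ω, Y2 ω))
      (fun ω => (Y2 ω, (V1 ω, U1 ω, Y1 ω))) U2
      (by intro ω ω'; simp only [Prod.ext_iff]; tauto)
    have hch := CMId_chain p V2 Y2 (fun ω => (V1 ω, U1 ω, Y1 ω)) U2
    have n1 := CMId_nonneg p hp hp1 V2 Y2 U2
    have n2 := CMId_nonneg p hp hp1 V2 (fun ω => (V1 ω, U1 ω, Y1 ω))
      (fun ω => (Y2 ω, U2 ω))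
    rw [e, hch] at hM4
    linarith
  have d2 : CMId p Y2 U1 Y1 = 0 := by
    have e := CMId_congr_mid p Y2 (fun ω => (V1 ω, U1 ω))
      (fun ω => (U1 ω, V1 ω)) Y1
      (by intro ω ω'; simp only [Prod.ext_iff]; tauto)
    have hch := CMId_chain p Y2 U1 V1 Y1
    have n1 := CMId_nonneg p hp hp1 Y2 U1 Y1
    have n2 := CMId_nonneg p hp hp1 Y2 V1 (fun ω => (U1 ω, Y1 ω))
    rw [e, hch] at hM2
    linarith
  have hM3' : CMId p U2 Y1 Y2 = 0 ∧
      CMId p U2 (fun ω => (U1 ω, V1 ω)) (fun ω => (Y1 ω, Y2 ω)) = 0 := by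
    have e := CMId_congr_mid p U2 (fun ω => (V1 ω, U1 ω, Y1 ω))
      (fun ω => (Y1 ω, (U1 ω, V1 ω))) Y2
      (by intro ω ω'; simp only [Prod.ext_iff]; tauto)
    have hch := CMId_chain p U2 Y1 (fun ω => (U1 ω, V1 ω)) Y2
    have n1 := CMId_nonneg p hp hp1 U2 Y1 Y2
    have n2 := CMId_nonneg p hp hp1 U2 (fun ω => (U1 ω, V1 ω))
      (fun ω => (Y1 ω, Y2 ω))
    rw [e, hch] at hM3
    constructor <;> linarith
  have d3 : CMId p U2 Y1 Y2 = 0 := hM3'.1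
  have d4 : CMId p U2 U1 (fun ω => (Y1 ω, Y2 ω)) = 0 := by
    have hch := CMId_chain p U2 U1 V1 (fun ω => (Y1 ω, Y2 ω))
    have n1 := CMId_nonneg p hp hp1 U2 U1 (fun ω => (Y1 ω, Y2 ω))
    have n2 := CMId_nonneg p hp hp1 U2 V1 (fun ω => (U1 ω, (Y1 ω, Y2 ω)))
    have h2 := hM3'.2
    rw [hch] at h2
    linarith
  -- entropy reshuffling identities
  have E1 : Hd p (fun ω => (V1 ω, Y1 ω)) = Hd p (fun ω => (Y1 ω, V1 ω)) :=
    Hd_congr p _ _ (by intro ω ω'; simp only [Prod.ext_iff]; tauto)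
  have E2 : Hd p (fun ω => (U1 ω, Y1 ω, V1 ω)) = Hd p (fun ω => (Y1 ω, V1 ω, U1 ω)) :=
    Hd_congr p _ _ (by intro ω ω'; simp only [Prod.ext_iff]; tauto)
  have E3 : Hd p (fun ω => (U1 ω, V1 ω)) = Hd p (fun ω => (V1 ω, U1 ω)) :=
    Hd_congr p _ _ (by intro ω ω'; simp only [Prod.ext_iff]; tauto)
  have E4 : Hd p (fun ω => (V2 ω, Y2 ω)) = Hd p (fun ω => (Y2 ω, V2 ω)) :=
    Hd_congr p _ _ (by intro ω ω'; simp only [Prod.ext_iff]; tauto)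
  have E5 : Hd p (fun ω => (U2 ω, Y2 ω, V2 ω)) = Hd p (fun ω => (V2 ω, Y2 ω, U2 ω)) :=
    Hd_congr p _ _ (by intro ω ω'; simp only [Prod.ext_iff]; tauto)
  have E6 : Hd p (fun ω => (U2 ω, V2 ω)) = Hd p (fun ω => (V2 ω, U2 ω)) :=
    Hd_congr p _ _ (by intro ω ω'; simp only [Prod.ext_iff]; tauto)
  have E7 : Hd p (fun ω => (Y1 ω, U1 ω)) = Hd p (fun ω => (U1 ω, Y1 ω)) :=
    Hd_congr p _ _ (by intro ω ω'; simp only [Prod.ext_iff]; tauto)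
  have E8 : Hd p (fun ω => (Y2 ω, U2 ω)) = Hd p (fun ω => (U2 ω, Y2 ω)) :=
    Hd_congr p _ _ (by intro ω ω'; simp only [Prod.ext_iff]; tauto)
  have E9 : Hd p (fun ω => (Y2 ω, Y1 ω)) = Hd p (fun ω => (Y1 ω, Y2 ω)) :=
    Hd_congr p _ _ (by intro ω ω'; simp only [Prod.ext_iff]; tauto)
  have E10 : Hd p (fun ω => (Y2 ω, U1 ω, Y1 ω))
      = Hd p (fun ω => (U1 ω, (Y1 ω, Y2 ω))) :=
    Hd_congr p _ _ (by intro ω ω'; simp only [Prod.ext_iff]; tauto)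
  have E11 : Hd p (fun ω => ((U1 ω, U2 ω), (Y1 ω, Y2 ω)))
      = Hd p (fun ω => (U2 ω, U1 ω, (Y1 ω, Y2 ω))) :=
    Hd_congr p _ _ (by intro ω ω'; simp only [Prod.ext_iff]; tauto)
  unfold CMId at hM1 d1 d2 d3 d4
  unfold MId CMId
  linarith
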